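/- Let m, N be positive integers with N square-free and gcd(m, N) = 1. Then there exists an integer n with 1 ≤ n ≤ 2N, n ≠ m, gcd(n, N) = 1, and |K(m, n, N)| ≥ √N / 2^{ω(N)/2 + 1}. -/

import Mathlib

/-!
Write `K(b) = K(m, b, N)`, a Kloosterman sum over `ZMod N` for the primitive character
`x ↦ e(x / N)`. Plancherel on `ZMod N` gives `∑_b |K(b)|² = N φ(N)`. For a prime `q ∣ N`, the
Chinese remainder theorem splits `K(b)` with `q ∣ b` into the Ramanujan sum
`∑_{u ≠ 0} e(m' u / q) = -1` times a Kloosterman sum modulo `N / q`, and Plancherel modulo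
`N / q` gives `∑_{q ∣ b} |K(b)|² = N φ(N) / (q (q - 1))`. As
`∑_{q ∣ N} 1 / (q (q - 1)) ≤ 1 - 1 / (ω(N) + 1)`, the `φ(N)` units `b` carry at least
`N φ(N) / (ω(N) + 1)`, so one of them has `|K(b)|² ≥ N / (ω(N) + 1) ≥ N / 2^(ω(N) + 2)`;
of its two representatives in `[1, 2N]`, one differs from `m`.
-/

open scoped BigOperators

/-- The Kloosterman sum `K(a,b,c) = ∑_{x mod c, gcd(x,c)=1} e((a x + b x̄)/c)`,
where `x̄` is the inverse of `x` modulo `c`. -/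
noncomputable def kloosterman (a b : ℤ) (c : ℕ) : ℂ :=
  ∑ x ∈ (Finset.range c).filter (fun x => Nat.gcd x c = 1),
    Complex.exp (2 * Real.pi * Complex.I *
      (((a * (x : ℤ) + b * ((((x : ZMod c)⁻¹ : ZMod c)).val : ℤ) : ℤ) : ℂ) / (c : ℂ)))

open Finset ComplexConjugate

lemma Finset.sum_biUnion_le_sum_sum {ι α β : Type*} [DecidableEq α] [AddCommMonoid β]
    [PartialOrder β] [IsOrderedAddMonoid β] {f : α → β} (hf : ∀ x, 0 ≤ f x) (s : Finset ι)
    (t : ι → Finset α) :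
    ∑ x ∈ s.biUnion t, f x ≤ ∑ i ∈ s, ∑ x ∈ t i, f x := by
  rw [← sup_eq_biUnion]
  refine apply_sup_le_sum (f := fun u => ∑ x ∈ u, f x) sum_empty (fun {u v} => ?_) s
  rw [← sum_union_inter]
  exact le_add_of_nonneg_right (sum_nonneg fun x _ => hf x)

/-- The `i`-th smallest element of `P` is at least `i + 1`, so the sum is dominated by the
telescoping sum `∑_{i ≤ #P} 1 / (i (i + 1))`. -/
lemma sum_one_div_mul_sub_one_le (P : Finset ℕ) (hP : ∀ q ∈ P, 2 ≤ q) :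
    ∑ q ∈ P, 1 / ((q : ℝ) * (q - 1)) ≤ 1 - 1 / (#P + 1) := by
  induction P using Finset.induction_on_max with
  | empty => simp
  | insert a P hlt ih =>
    have ha : a ∉ P := fun h => (hlt a h).false
    have hcard : #P + 2 ≤ a := by
      have := card_le_card fun x hx => mem_Ico.mpr ⟨hP x (mem_insert_of_mem hx), hlt x hx⟩
      have := hP a (mem_insert_self a P)
      simp only [Nat.card_Ico] at *
      omega
    have hcard' : (#P : ℝ) + 2 ≤ a := by exact_mod_cast hcard
    have hterm : 1 / ((a : ℝ) * (a - 1)) ≤ 1 / ((#P + 1) * (#P + 2)) :=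
      one_div_le_one_div_of_le (by positivity) (by nlinarith)
    have htelescope : (1 : ℝ) / ((#P + 1) * (#P + 2)) = 1 / (#P + 1) - 1 / (#P + 2) := by
      field_simp
      ring
    rw [sum_insert ha, card_insert_of_notMem ha]
    push_cast
    rw [add_assoc, one_add_one_eq_two]
    linarith [ih fun q hq => hP q (mem_insert_of_mem hq)]

lemma sqrt_div_two_rpow_le_sqrt_div {x : ℝ} (hx : 0 ≤ x) (k : ℕ) :
    √x / 2 ^ ((k : ℝ) / 2 + 1) ≤ √(x / (k + 1)) := by
  have hpow : (2 : ℝ) ^ ((k : ℝ) / 2 + 1) = √(2 ^ (k + 2)) := by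
    rw [Real.sqrt_eq_rpow, ← Real.rpow_natCast, ← Real.rpow_mul zero_le_two]
    push_cast
    ring_nf
  have hk : (k : ℝ) + 1 ≤ 2 ^ (k + 2) := by
    exact_mod_cast Nat.lt_two_pow_self.trans_le (Nat.pow_le_pow_right two_pos (by omega))
  rw [hpow, ← Real.sqrt_div' _ (by positivity)]
  exact Real.sqrt_le_sqrt (div_le_div_of_nonneg_left hx (by positivity) hk)

namespace AddChar

variable {R S R' : Type*} [CommRing R] [CommRing S]

lemma IsPrimitive.compAddMonoidHom_ringEquiv [CommMonoid R'] {ψ : AddChar R R'}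
    (hψ : ψ.IsPrimitive) (e : S ≃+* R) :
    (ψ.compAddMonoidHom e.toAddMonoidHom).IsPrimitive := by
  intro a ha h
  refine hψ (e.map_ne_zero_iff.mpr ha) (DFunLike.ext _ _ fun y => ?_)
  simpa using DFunLike.congr_fun h (e.symm y)

lemma IsPrimitive.compAddMonoidHom_inl [CommMonoid R'] {ψ : AddChar (R × S) R'}
    (hψ : ψ.IsPrimitive) : (ψ.compAddMonoidHom (AddMonoidHom.inl R S)).IsPrimitive := by
  intro a ha h
  refine hψ (a := (a, 0)) (by simpa using ha) (DFunLike.ext _ _ fun ⟨y, _⟩ => ?_)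
  simpa using DFunLike.congr_fun h y

lemma IsPrimitive.compAddMonoidHom_inr [CommMonoid R'] {ψ : AddChar (R × S) R'}
    (hψ : ψ.IsPrimitive) : (ψ.compAddMonoidHom (AddMonoidHom.inr R S)).IsPrimitive := by
  intro a ha h
  refine hψ (a := (0, a)) (by simpa using ha) (DFunLike.ext _ _ fun ⟨_, y⟩ => ?_)
  simpa using DFunLike.congr_fun h y

lemma IsPrimitive.sum_norm_sq_sum_mul_apply_mul [Fintype R] {ψ : AddChar R ℂ}
    (hψ : ψ.IsPrimitive) {ι : Type*} [Fintype ι] {e : ι → R} (he : Function.Injective e)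
    (g : ι → ℂ) :
    ∑ b, ‖∑ i, g i * ψ (b * e i)‖ ^ 2 = Fintype.card R * ∑ i, ‖g i‖ ^ 2 := by
  classical
  have orthogonality (i j : ι) : ∑ b, ψ (b * e i) * conj (ψ (b * e j)) =
      if i = j then (Fintype.card R : ℂ) else 0 := by
    simp_rw [← map_neg_eq_conj, ← map_add_eq_mul, ← mul_neg, ← mul_add, ← sub_eq_add_neg,
      sum_mulShift _ hψ, sub_eq_zero, he.eq_iff]
    split_ifs <;> simp
  apply Complex.ofReal_injective
  push_cast
  simp_rw [← Complex.mul_conj', map_sum, map_mul, sum_mul_sum, mul_sum]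
  calc ∑ b, ∑ i, ∑ j, g i * ψ (b * e i) * (conj (g j) * conj (ψ (b * e j)))
      = ∑ i, ∑ j, g i * conj (g j) * ∑ b, ψ (b * e i) * conj (ψ (b * e j)) := by
        rw [sum_comm]
        refine sum_congr rfl fun i _ => ?_
        rw [sum_comm]
        refine sum_congr rfl fun j _ => ?_
        rw [mul_sum]
        exact sum_congr rfl fun b _ => by ring
    _ = _ := by simp [orthogonality, mul_comm]

end AddChar

noncomputable def kloostermanSum {R : Type*} [CommRing R] [Fintype R] [DecidableEq R]
    (ψ : AddChar R ℂ) (a b : R) : ℂ :=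
  ∑ u : Rˣ, ψ (a * u + b * ↑u⁻¹)

section kloostermanSum

variable {R S : Type*} [CommRing R] [Fintype R] [DecidableEq R]
  [CommRing S] [Fintype S] [DecidableEq S]

lemma sum_norm_sq_kloostermanSum {ψ : AddChar R ℂ} (hψ : ψ.IsPrimitive) (a : R) :
    ∑ b, ‖kloostermanSum ψ a b‖ ^ 2 = Fintype.card R * Fintype.card Rˣ := by
  have h := hψ.sum_norm_sq_sum_mul_apply_mul (e := fun u : Rˣ => (↑u⁻¹ : R))
    (fun u v huv => inv_inj.mp (Units.ext huv)) (fun u => ψ (a * u))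
  simpa [kloostermanSum, AddChar.map_add_eq_mul] using h

lemma kloostermanSum_ringEquiv (ψ : AddChar R ℂ) (e : R ≃+* S) (a b : R) :
    kloostermanSum ψ a b =
      kloostermanSum (ψ.compAddMonoidHom e.symm.toAddMonoidHom) (e a) (e b) := by
  refine Fintype.sum_equiv (Units.mapEquiv e.toMulEquiv).toEquiv _ _ fun u => ?_
  have hinv : (↑((Units.mapEquiv e.toMulEquiv).toEquiv u)⁻¹ : S) = e ↑u⁻¹ := by
    rw [MulEquiv.toEquiv_eq_coe, MulEquiv.coe_toEquiv, ← map_inv, Units.coe_mapEquiv]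
    rfl
  rw [hinv]
  simp

lemma kloostermanSum_prod (ψ : AddChar (R × S) ℂ) (a b : R × S) :
    kloostermanSum ψ a b =
      kloostermanSum (ψ.compAddMonoidHom (AddMonoidHom.inl R S)) a.1 b.1 *
        kloostermanSum (ψ.compAddMonoidHom (AddMonoidHom.inr R S)) a.2 b.2 := by
  rw [kloostermanSum, kloostermanSum, kloostermanSum, sum_mul_sum, ← Fintype.sum_prod_type']
  refine Fintype.sum_equiv MulEquiv.prodUnits.toEquiv _ _ fun u => ?_
  rw [AddChar.compAddMonoidHom_apply, AddChar.compAddMonoidHom_apply, ← AddChar.map_add_eq_mul]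
  congr 1
  ext <;> simp [MulEquiv.prodUnits, Units.coe_map_inv]

lemma kloostermanSum_zero_right {F : Type*} [Field F] [Fintype F] [DecidableEq F]
    {ψ : AddChar F ℂ} (hψ : ψ.IsPrimitive) {a : F} (ha : a ≠ 0) :
    kloostermanSum ψ a 0 = -1 := by
  have hsum : ∑ x, ψ (a * x) = 0 := by
    simpa [mul_comm, ha] using AddChar.sum_mulShift a hψ
  have hunits : kloostermanSum ψ a 0 = ∑ x : {x : F // x ≠ 0}, ψ (a * x) := by
    simpa [kloostermanSum] using
      Fintype.sum_equiv (unitsEquivNeZero (G₀ := F)) _ (fun x => ψ (a * x)) fun _ => rfl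
  have hsplit := Fintype.sum_eq_add_sum_subtype_ne (fun x => ψ (a * x)) 0
  rw [hsum, mul_zero, AddChar.map_zero_eq_one, ← hunits] at hsplit
  linear_combination -hsplit

end kloostermanSum

lemma kloosterman_eq_kloostermanSum (a b : ℤ) (N : ℕ) [NeZero N] :
    kloosterman a b N = kloostermanSum ZMod.stdAddChar (a : ZMod N) (b : ZMod N) := by
  refine sum_bij' (fun x hx => ZMod.unitOfCoprime x (mem_filter.mp hx).2)
    (fun u _ => (u : ZMod N).val) (fun _ _ => mem_univ _) (fun u _ => ?_) (fun x hx => ?_)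
    (fun u _ => ?_) (fun x hx => ?_)
  · exact mem_filter.mpr ⟨mem_range.mpr (ZMod.val_lt _), ZMod.val_coe_unit_coprime u⟩
  · simp [ZMod.val_natCast_of_lt (mem_range.mp (mem_filter.mp hx).1)]
  · ext
    simp
  · rw [← mul_div_assoc, ← ZMod.stdAddChar_coe]
    simp [← ZMod.inv_coe_unit]

section ZMod

variable {N : ℕ} [NeZero N] {ψ : AddChar (ZMod N) ℂ} {a : ZMod N}

/-- Through `ZMod N ≃ ZMod q × ZMod M`, `K(a, b)` with `q ∣ b` is the Ramanujan sum
`K(a mod q, 0) = -1` times `K(a mod M, b mod M)`, and the latter runs over all `b mod M`. -/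
lemma sum_norm_sq_kloostermanSum_filter_dvd {q M : ℕ} (hq : q.Prime) (hqM : ¬ q ∣ M)
    (hN : N = q * M) (hψ : ψ.IsPrimitive) (ha : IsUnit a) :
    ∑ b with q ∣ b.val, ‖kloostermanSum ψ a b‖ ^ 2 = M * M.totient := by
  subst hN
  have : Fact q.Prime := ⟨hq⟩
  have : NeZero M := ⟨right_ne_zero_of_mul (NeZero.ne (q * M))⟩
  set e := ZMod.chineseRemainder (hq.coprime_iff_not_dvd.mpr hqM)
  set ψ' := ψ.compAddMonoidHom e.symm.toAddMonoidHom
  have hψ' : ψ'.IsPrimitive := hψ.compAddMonoidHom_ringEquiv e.symm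
  have hdvd_iff (x : ZMod (q * M)) : q ∣ x.val ↔ (e x).1 = 0 := by
    conv_rhs => rw [← ZMod.natCast_zmod_val x, map_natCast, Prod.fst_natCast]
    rw [ZMod.natCast_eq_zero_iff]
  have hea : (e a).1 ≠ 0 := (Prod.isUnit_iff.mp (ha.map e)).1.ne_zero
  have hnorm (b : ZMod (q * M)) (hb : q ∣ b.val) : ‖kloostermanSum ψ a b‖ =
      ‖kloostermanSum (ψ'.compAddMonoidHom (AddMonoidHom.inr _ _)) (e a).2 (e b).2‖ := by
    rw [kloostermanSum_ringEquiv ψ e, kloostermanSum_prod, (hdvd_iff b).mp hb,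
      kloostermanSum_zero_right hψ'.compAddMonoidHom_inl hea, norm_mul, norm_neg, norm_one,
      one_mul]
  rw [sum_congr rfl fun b hb => by rw [hnorm b (mem_filter.mp hb).2]]
  set ψ₂ := ψ'.compAddMonoidHom (AddMonoidHom.inr _ _)
  calc _ = ∑ c, ‖kloostermanSum ψ₂ (e a).2 c‖ ^ 2 := by
        refine sum_nbij' (fun b => (e b).2) (fun c => e.symm (0, c)) (fun _ _ => mem_univ _)
          (fun c _ => mem_filter.mpr ⟨mem_univ _, (hdvd_iff _).mpr (by simp)⟩)
          (fun b hb => ?_) (fun c _ => by simp) (fun _ _ => rfl)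
        rw [e.symm_apply_eq, ← (hdvd_iff b).mp (mem_filter.mp hb).2]
    _ = M * M.totient := by
        rw [sum_norm_sq_kloostermanSum hψ'.compAddMonoidHom_inr, ZMod.card,
          ZMod.card_units_eq_totient]

lemma sum_nonunit_norm_sq_kloostermanSum_le (hsf : Squarefree N) (hψ : ψ.IsPrimitive)
    (ha : IsUnit a) :
    ∑ b with ¬IsUnit b, ‖kloostermanSum ψ a b‖ ^ 2 ≤
      N * N.totient * ∑ q ∈ N.primeFactors, 1 / ((q : ℝ) * (q - 1)) := by
  have hcover : univ.filter (fun b : ZMod N => ¬IsUnit b) ⊆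
      N.primeFactors.biUnion fun q => univ.filter fun b : ZMod N => q ∣ b.val := by
    intro b hb
    rw [mem_filter, ← ZMod.natCast_zmod_val b, ZMod.isUnit_iff_coprime,
      Nat.Prime.not_coprime_iff_dvd] at hb
    obtain ⟨q, hq, hqb, hqN⟩ := hb.2
    exact mem_biUnion.mpr
      ⟨q, Nat.mem_primeFactors.mpr ⟨hq, hqN, NeZero.ne N⟩, by simpa using hqb⟩
  have hprime (q : ℕ) (hq : q ∈ N.primeFactors) :
      ∑ b with q ∣ b.val, ‖kloostermanSum ψ a b‖ ^ 2 =
        N * N.totient * (1 / ((q : ℝ) * (q - 1))) := by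
    obtain ⟨hqp, ⟨M, rfl⟩, -⟩ := Nat.mem_primeFactors.mp hq
    have hqM : ¬ q ∣ M := hqp.coprime_iff_not_dvd.mp (Nat.coprime_of_squarefree_mul hsf)
    rw [sum_norm_sq_kloostermanSum_filter_dvd hqp hqM rfl hψ ha,
      Nat.totient_mul_of_prime_of_not_dvd hqp hqM]
    have : (q : ℝ) ≠ 0 := by exact_mod_cast hqp.ne_zero
    have : (q : ℝ) - 1 ≠ 0 := sub_ne_zero.mpr (by exact_mod_cast hqp.one_lt.ne')
    push_cast [Nat.cast_sub hqp.one_lt.le]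
    field_simp
  calc _ ≤ ∑ q ∈ N.primeFactors, ∑ b with q ∣ b.val, ‖kloostermanSum ψ a b‖ ^ 2 :=
        (sum_le_sum_of_subset_of_nonneg hcover fun _ _ _ => by positivity).trans
          (sum_biUnion_le_sum_sum (fun _ => by positivity) _ _)
    _ = _ := by rw [sum_congr rfl hprime, mul_sum]

lemma exists_isUnit_le_norm_sq_kloostermanSum (hsf : Squarefree N) (hψ : ψ.IsPrimitive)
    (ha : IsUnit a) :
    ∃ b : ZMod N, IsUnit b ∧ N / (#N.primeFactors + 1 : ℝ) ≤ ‖kloostermanSum ψ a b‖ ^ 2 := by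
  have hcard : #(univ.filter fun b : ZMod N => IsUnit b) = N.totient := by
    rw [← ZMod.card_units_eq_totient, ← card_univ, ← card_map ⟨_, Units.val_injective⟩]
    congr 1
    ext b
    simp only [mem_filter, mem_univ, true_and, mem_map]
    rfl
  have htotal := sum_norm_sq_kloostermanSum hψ a
  rw [← sum_filter_add_sum_filter_not univ IsUnit, ZMod.card, ZMod.card_units_eq_totient]
    at htotal
  have hbad := (sum_nonunit_norm_sq_kloostermanSum_le hsf hψ ha).trans
    (mul_le_mul_of_nonneg_left (sum_one_div_mul_sub_one_le N.primeFactors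
      fun q hq => (Nat.prime_of_mem_primeFactors hq).two_le) (by positivity))
  have hgood : ∑ b : ZMod N with IsUnit b, (N / (#N.primeFactors + 1 : ℝ)) ≤
      ∑ b with IsUnit b, ‖kloostermanSum ψ a b‖ ^ 2 := by
    rw [sum_const, hcard, nsmul_eq_mul]
    have : (N : ℝ) * N.totient * (1 / (#N.primeFactors + 1)) =
        N.totient * (N / (#N.primeFactors + 1)) := by ring
    linarith
  obtain ⟨b, hb, hle⟩ := exists_le_of_sum_le ⟨1, by simp⟩ hgood
  exact ⟨b, (mem_filter.mp hb).2, hle⟩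

lemma exists_natCast_eq_ne (b : ZMod N) (m : ℕ) :
    ∃ n, 1 ≤ n ∧ n ≤ 2 * N ∧ n ≠ m ∧ (n : ZMod N) = b := by
  obtain ⟨r, hr1, hrN, hrb⟩ : ∃ r, 1 ≤ r ∧ r ≤ N ∧ (r : ZMod N) = b := by
    by_cases hb : b.val = 0
    · exact ⟨N, Nat.one_le_iff_ne_zero.mpr (NeZero.ne N), le_rfl,
        by simp [(ZMod.val_eq_zero b).mp hb]⟩
    · exact ⟨b.val, Nat.one_le_iff_ne_zero.mpr hb, (ZMod.val_lt b).le, ZMod.natCast_zmod_val b⟩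
  by_cases hrm : r = m
  · exact ⟨r + N, by omega, by omega, by omega, by simp [hrb]⟩
  · exact ⟨r, hr1, by omega, hrm, hrb⟩

end ZMod

theorem exists_large_kloosterman_general (m N : ℕ) (hsf : Squarefree N)
    (hmN : Nat.gcd m N = 1) :
    ∃ n : ℕ, 1 ≤ n ∧ n ≤ 2 * N ∧ n ≠ m ∧ Nat.gcd n N = 1 ∧
      Real.sqrt N / 2 ^ ((N.primeFactors.card : ℝ) / 2 + 1) ≤
        ‖kloosterman (m : ℤ) (n : ℤ) N‖ := by
  have : NeZero N := ⟨hsf.ne_zero⟩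
  have hm : IsUnit (m : ZMod N) := (ZMod.isUnit_iff_coprime m N).mpr hmN
  obtain ⟨b, hb, hK⟩ :=
    exists_isUnit_le_norm_sq_kloostermanSum hsf (ZMod.isPrimitive_stdAddChar N) hm
  obtain ⟨n, hn1, hn2, hnm, rfl⟩ := exists_natCast_eq_ne b m
  refine ⟨n, hn1, hn2, hnm, (ZMod.isUnit_iff_coprime n N).mp hb, ?_⟩
  rw [kloosterman_eq_kloostermanSum, Int.cast_natCast, Int.cast_natCast]
  calc _ ≤ √(N / (#N.primeFactors + 1)) :=
        sqrt_div_two_rpow_le_sqrt_div (Nat.cast_nonneg N) _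
    _ ≤ _ := (Real.sqrt_le_sqrt hK).trans_eq (Real.sqrt_sq (norm_nonneg _))

/-- For square-free `N` and `gcd(m,N) = 1`, there exists `1 ≤ n ≤ 2N` with `n ≠ m`,
`gcd(n,N) = 1` and `|K(m,n,N)| ≥ √N / 2^{ω(N)/2 + 1}`. -/
theorem exists_large_kloosterman (m N : ℕ) (hm : 0 < m) (hN : 0 < N) (hsf : Squarefree N)
    (hmN : Nat.gcd m N = 1) :
    ∃ n : ℕ, 1 ≤ n ∧ n ≤ 2 * N ∧ n ≠ m ∧ Nat.gcd n N = 1 ∧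
      Real.sqrt N / 2 ^ ((N.primeFactors.card : ℝ) / 2 + 1) ≤
        ‖kloosterman (m : ℤ) (n : ℤ) N‖ :=
  exists_large_kloosterman_general m N hsf hmN
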